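/- Let (R, Ad_Γ) be a central graded von Neumann algebra such that R is of type I_n (n a cardinal) and R is not a factor. Then the even part R^(0) is a factor of type I_n, and every abelian projection of R^(0) is abelian in R. -/

import Mathlib

noncomputable section

variable {H : Type*} [NormedAddCommGroup H] [InnerProductSpace ℂ H] [CompleteSpace H]

/-- A self-adjoint unitary operator. -/
def IsSAU (Γ : H →L[ℂ] H) : Prop := star Γ = Γ ∧ Γ * Γ = 1

/-- The even part of a graded set of operators. -/
def evenPart (R : Set (H →L[ℂ] H)) (Γ : H →L[ℂ] H) : Set (H →L[ℂ] H) :=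
  {x | x ∈ R ∧ Γ * x * Γ = x}

/-- The odd part of a graded set of operators. -/
def oddPart (R : Set (H →L[ℂ] H)) (Γ : H →L[ℂ] H) : Set (H →L[ℂ] H) :=
  {x | x ∈ R ∧ Γ * x * Γ = -x}

/-- The center of a set of operators. -/
def centerSet (R : Set (H →L[ℂ] H)) : Set (H →L[ℂ] H) :=
  {x | x ∈ R ∧ ∀ y ∈ R, x * y = y * x}

/-- An (orthogonal) projection operator. -/
def IsProjOp (e : H →L[ℂ] H) : Prop := e * e = e ∧ star e = e

/-- `e` is a subprojection of `f`. -/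
def SubProj (e f : H →L[ℂ] H) : Prop := e * f = e ∧ f * e = e

/-- Murray–von Neumann equivalence of projections relative to `M`. -/
def MvNEquiv (M : Set (H →L[ℂ] H)) (e f : H →L[ℂ] H) : Prop :=
  ∃ v ∈ M, star v * v = e ∧ v * star v = f

/-- `e` is finite relative to `M`. -/
def FiniteProj (M : Set (H →L[ℂ] H)) (e : H →L[ℂ] H) : Prop :=
  ∀ f ∈ M, IsProjOp f → SubProj f e → MvNEquiv M f e → f = e

/-- `e` is an abelian projection relative to `M`: the corner `eMe` is commutative. -/
def AbelianProj (M : Set (H →L[ℂ] H)) (e : H →L[ℂ] H) : Prop :=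
  ∀ x ∈ M, ∀ y ∈ M, (e * x * e) * (e * y * e) = (e * y * e) * (e * x * e)

/-- A von Neumann algebra (given as a set) is of type III: no nonzero finite projections. -/
def TypeIII (M : Set (H →L[ℂ] H)) : Prop :=
  ∀ e ∈ M, IsProjOp e → FiniteProj M e → e = 0

/-- Type II₁ : finite with no nonzero abelian projections. -/
def TypeII1 (M : Set (H →L[ℂ] H)) : Prop :=
  FiniteProj M 1 ∧ ∀ e ∈ M, IsProjOp e → AbelianProj M e → e = 0

/-- Type I_n : the identity is the sum of `n` orthogonal, mutually equivalent
abelian projections. -/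
def TypeI (M : Set (H →L[ℂ] H)) (n : Cardinal) : Prop :=
  ∃ (ι : Type) (E : ι → H →L[ℂ] H), Cardinal.mk ι = n ∧
    (∀ a, E a ∈ M ∧ IsProjOp (E a) ∧ AbelianProj M (E a)) ∧
    (Pairwise fun a b => E a * E b = 0) ∧
    (∀ a b, MvNEquiv M (E a) (E b)) ∧
    (∀ v : H, HasSum (fun a => (E a) v) v)

/-- The scalar operators. -/
def scalarOps (H : Type*) [NormedAddCommGroup H] [InnerProductSpace ℂ H] [CompleteSpace H] :
    Set (H →L[ℂ] H) := Set.range fun c : ℂ => c • (1 : H →L[ℂ] H)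

/-- `M` is a factor. -/
def IsFactor (M : Set (H →L[ℂ] H)) : Prop := centerSet M = scalarOps H

/-- `R` is graded by the self-adjoint unitary `Γ`. -/
def GradedBy (R : Set (H →L[ℂ] H)) (Γ : H →L[ℂ] H) : Prop :=
  IsSAU Γ ∧ ∀ x ∈ R, Γ * x * Γ ∈ R

/-- The von Neumann algebra generated by a (star-closed, unital) set:
its double commutant. -/
def genVN (S : Set (H →L[ℂ] H)) : Set (H →L[ℂ] H) :=
  Set.centralizer (Set.centralizer S)

/-- `c` is the central support of `T` in `M`. -/
def IsCentralSupport (M : Set (H →L[ℂ] H)) (T c : H →L[ℂ] H) : Prop :=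
  c ∈ centerSet M ∧ IsProjOp c ∧ c * T = T ∧
    ∀ d ∈ centerSet M, IsProjOp d → d * T = T → c * d = c

/-! Since `R` is central but not a factor, its center contains a nonzero self-adjoint odd
element `w` (the odd part of a non-scalar self-adjoint central element); `w * w` is even and
central, hence a positive scalar, so a real multiple `u` of `w` is an odd central symmetry.
Then `R = R⁰ + R⁰ u` with `u` central: an element of `R⁰` commuting with `R⁰` is central in `R`,
hence scalar, and a projection `e ∈ R⁰` with `e R⁰ e` commutative has `e R e` commutative.
For `p = (1 + u) / 2`, whose conjugate by `Γ` is `1 - p`, the map `X ↦ X p + (Γ X Γ) (1 - p)`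
is a unital *-homomorphism from `R` into `R⁰`; it carries `n` orthogonal equivalent abelian
projections of `R` with sum `1` to such projections of `R⁰`. -/

open ComplexStarModule

namespace StarSubalgebra

variable {A : Type*} [Ring A] [StarRing A] [Algebra ℂ A] [StarModule ℂ A]

theorem realPart_mem {S : StarSubalgebra ℂ A} {x : A} (hx : x ∈ S) : (ℜ x : A) ∈ S := by
  rw [realPart_apply_coe, ← algebraMap_smul ℂ]
  exact S.smul_mem (add_mem hx (star_mem hx)) _

theorem imaginaryPart_mem {S : StarSubalgebra ℂ A} {x : A} (hx : x ∈ S) : (ℑ x : A) ∈ S := by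
  rw [imaginaryPart_apply_coe, ← algebraMap_smul ℂ]
  exact S.smul_mem (S.smul_mem (sub_mem hx (star_mem hx)) _) _

theorem exists_isSelfAdjoint_mem_notMem_of_not_le {S T : StarSubalgebra ℂ A} (h : ¬S ≤ T) :
    ∃ z ∈ S, IsSelfAdjoint z ∧ z ∉ T := by
  obtain ⟨z, hzS, hzT⟩ := SetLike.not_le_iff_exists.mp h
  by_contra! hsa
  apply hzT
  rw [← realPart_add_I_smul_imaginaryPart z]
  exact add_mem (hsa _ (realPart_mem hzS) (ℜ z).2)
    (T.smul_mem (hsa _ (imaginaryPart_mem hzS) (ℑ z).2) _)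

end StarSubalgebra

theorem IsSelfAdjoint.exists_real_smul_mul_self_eq_one {w : H →L[ℂ] H} (hw : IsSelfAdjoint w)
    (hw0 : w ≠ 0) {c : ℂ} (hc : w * w = c • 1) :
    ∃ t : ℝ, ((t : ℂ) • w) * ((t : ℂ) • w) = 1 := by
  obtain ⟨v, hv⟩ : ∃ v, w v ≠ 0 := by
    by_contra! h
    exact hw0 (ContinuousLinearMap.ext h)
  have hv0 : v ≠ 0 := by
    rintro rfl
    simp at hv
  have hcv : c * (‖v‖ : ℂ) ^ 2 = (‖w v‖ : ℂ) ^ 2 := by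
    calc c * (‖v‖ : ℂ) ^ 2 = inner ℂ v ((c • (1 : H →L[ℂ] H)) v) := by
          simp [inner_self_eq_norm_sq_to_K]
      _ = inner ℂ (w v) (w v) := by rw [← hc]; exact (hw.isSymmetric v (w v)).symm
      _ = (‖w v‖ : ℂ) ^ 2 := inner_self_eq_norm_sq_to_K _
  refine ⟨‖v‖ / ‖w v‖, ?_⟩
  rw [smul_mul_smul_comm, hc, smul_smul]
  have : (↑(‖v‖ / ‖w v‖) * ↑(‖v‖ / ‖w v‖) * c : ℂ) = 1 := by
    have h1 : (‖v‖ : ℂ) ≠ 0 := by exact_mod_cast norm_ne_zero_iff.mpr hv0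
    have h2 : (‖w v‖ : ℂ) ≠ 0 := by exact_mod_cast norm_ne_zero_iff.mpr hv
    push_cast
    field_simp
    linear_combination hcv
  rw [this, one_smul]

theorem scalarOps_eq_bot :
    scalarOps H = ((⊥ : StarSubalgebra ℂ (H →L[ℂ] H)) : Set (H →L[ℂ] H)) := by
  rw [scalarOps, StarSubalgebra.coe_bot]
  exact congrArg Set.range (funext fun c => (Algebra.algebraMap_eq_smul_one c).symm)

def centerStarSubalgebra (R : StarSubalgebra ℂ (H →L[ℂ] H)) : StarSubalgebra ℂ (H →L[ℂ] H) :=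
  R ⊓ StarSubalgebra.centralizer ℂ (R : Set (H →L[ℂ] H))

section Center

variable {R : StarSubalgebra ℂ (H →L[ℂ] H)} {Γ x : H →L[ℂ] H}

theorem coe_centerStarSubalgebra :
    (centerStarSubalgebra R : Set (H →L[ℂ] H)) = centerSet R := by
  ext x
  simp only [SetLike.mem_coe, centerStarSubalgebra, StarSubalgebra.mem_inf,
    StarSubalgebra.mem_centralizer_iff, centerSet, Set.mem_ofPred_eq]
  refine and_congr_right fun _ => ⟨fun h y hy => (h y hy).1.symm, fun h y hy => ?_⟩
  exact ⟨(h y hy).symm, (h _ (star_mem hy)).symm⟩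

theorem mem_centerStarSubalgebra : x ∈ centerStarSubalgebra R ↔ x ∈ centerSet R := by
  rw [← coe_centerStarSubalgebra, SetLike.mem_coe]

theorem not_centerStarSubalgebra_le_bot (hR : ¬IsFactor (R : Set (H →L[ℂ] H))) :
    ¬centerStarSubalgebra R ≤ ⊥ := fun h =>
  hR <| by rw [IsFactor, scalarOps_eq_bot, ← le_antisymm h bot_le, coe_centerStarSubalgebra]

theorem mem_bot_of_mem_centerSet_of_conj_eq
    (hcentral : centerSet R ∩ evenPart R Γ = scalarOps H) {z : H →L[ℂ] H}
    (hz : z ∈ centerSet R) (hΓz : Γ * z * Γ = z) : z ∈ (⊥ : StarSubalgebra ℂ (H →L[ℂ] H)) := by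
  rw [← SetLike.mem_coe, ← scalarOps_eq_bot, ← hcentral]
  exact ⟨hz, hz.1, hΓz⟩

end Center

section Conj

variable {R : StarSubalgebra ℂ (H →L[ℂ] H)} {Γ : H →L[ℂ] H}

theorem IsSAU.conj_conj (hΓ : IsSAU Γ) (x : H →L[ℂ] H) : Γ * (Γ * x * Γ) * Γ = x := by
  simp only [← mul_assoc, hΓ.2, one_mul]
  rw [mul_assoc, hΓ.2, mul_one]

theorem IsSAU.conj_mul_conj (hΓ : IsSAU Γ) (x y : H →L[ℂ] H) :
    Γ * x * Γ * (Γ * y * Γ) = Γ * (x * y) * Γ := by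
  calc Γ * x * Γ * (Γ * y * Γ) = Γ * x * (Γ * Γ) * y * Γ := by noncomm_ring
    _ = Γ * (x * y) * Γ := by rw [hΓ.2, mul_one, mul_assoc Γ x y]

theorem IsSAU.star_conj (hΓ : IsSAU Γ) (x : H →L[ℂ] H) :
    star (Γ * x * Γ) = Γ * star x * Γ := by
  simp only [star_mul, hΓ.1, mul_assoc]

theorem IsSAU.conj_one (hΓ : IsSAU Γ) : Γ * 1 * Γ = 1 := by
  rw [mul_one, hΓ.2]

theorem GradedBy.conj_mem_centerSet (hR : GradedBy R Γ) {z : H →L[ℂ] H}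
    (hz : z ∈ centerSet R) : Γ * z * Γ ∈ centerSet R := by
  refine ⟨hR.2 z hz.1, fun y hy => ?_⟩
  rw [← hR.1.conj_conj y, hR.1.conj_mul_conj, hR.1.conj_mul_conj, hz.2 _ (hR.2 y hy)]

end Conj

def evenRetract (Γ p X : H →L[ℂ] H) : H →L[ℂ] H := X * p + Γ * X * Γ * (1 - p)

section EvenRetract

variable {R : StarSubalgebra ℂ (H →L[ℂ] H)} {Γ p X Y : H →L[ℂ] H}

theorem evenRetract_of_mem_evenPart (hX : X ∈ evenPart R Γ) : evenRetract Γ p X = X := by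
  rw [evenRetract, hX.2, ← mul_add, add_sub_cancel, mul_one]

theorem evenRetract_mem_evenPart (hR : GradedBy R Γ) (hpR : p ∈ R) (hΓp : Γ * p * Γ = 1 - p)
    (hX : X ∈ R) : evenRetract Γ p X ∈ evenPart R Γ := by
  have hΓq : Γ * (1 - p) * Γ = p := by rw [mul_sub, sub_mul, hR.1.conj_one, hΓp, sub_sub_cancel]
  refine ⟨add_mem (mul_mem hX hpR) (mul_mem (hR.2 X hX) (sub_mem (one_mem R) hpR)), ?_⟩
  rw [evenRetract, mul_add, add_mul, ← hR.1.conj_mul_conj, ← hR.1.conj_mul_conj, hR.1.conj_conj,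
    hΓp, hΓq, add_comm]

theorem evenRetract_mul (hR : GradedBy R Γ) (hp : p ∈ centerSet R) (hpp : IsIdempotentElem p)
    (hY : Y ∈ R) :
    evenRetract Γ p (X * Y) = evenRetract Γ p X * evenRetract Γ p Y := by
  have hpc : ∀ y ∈ R, Commute p y := hp.2
  have hqc : ∀ y ∈ R, Commute (1 - p) y := fun y hy => (Commute.one_left y).sub_left (hpc y hy)
  have hΓY := hR.2 Y hY
  rw [evenRetract, evenRetract, evenRetract, add_mul, mul_add, mul_add,
    (hpc Y hY).mul_mul_mul_comm, (hpc _ hΓY).mul_mul_mul_comm, (hqc Y hY).mul_mul_mul_comm,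
    (hqc _ hΓY).mul_mul_mul_comm, hpp.eq, hpp.one_sub.eq, hpp.mul_one_sub_self,
    hpp.one_sub_mul_self, mul_zero, mul_zero, add_zero, zero_add, hR.1.conj_mul_conj]

theorem star_evenRetract (hR : GradedBy R Γ) (hp : p ∈ centerSet R) (hps : star p = p)
    (hX : X ∈ R) : star (evenRetract Γ p X) = evenRetract Γ p (star X) := by
  have hpc : ∀ y ∈ R, Commute p y := hp.2
  have hΓX := hR.2 _ (star_mem hX)
  rw [evenRetract, evenRetract, star_add, star_mul, star_mul, star_sub, star_one, hps,
    hR.1.star_conj, (hpc _ (star_mem hX)).eq, ((Commute.one_left _).sub_left (hpc _ hΓX)).eq]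

theorem typeI_evenPart_of_mem_centerSet (hR : GradedBy R Γ) (hp : p ∈ centerSet R)
    (hpp : IsProjOp p) (hΓp : Γ * p * Γ = 1 - p) {n : Cardinal}
    (hn : TypeI (R : Set (H →L[ℂ] H)) n) : TypeI (evenPart R Γ) n := by
  obtain ⟨ι, E, hcard, hE, horth, hequiv, hsum⟩ := hn
  set φ := evenRetract Γ p
  have hφmul : ∀ X, ∀ Y ∈ R, φ X * φ Y = φ (X * Y) := fun X Y hY =>
    (evenRetract_mul hR hp hpp.1 hY).symm
  have hφstar : ∀ X ∈ R, star (φ X) = φ (star X) := fun X hX => star_evenRetract hR hp hpp.2 hX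
  have hφeven : ∀ x ∈ evenPart R Γ, φ x = x := fun x hx => evenRetract_of_mem_evenPart hx
  have hcorner : ∀ a, ∀ x ∈ evenPart R Γ, φ (E a) * x * φ (E a) = φ (E a * x * E a) :=
    fun a x hx => by rw [← hφmul _ _ (hE a).1, ← hφmul _ _ hx.1, hφeven x hx]
  have hcornerR : ∀ a, ∀ x ∈ R, E a * x * E a ∈ R := fun a x hx =>
    mul_mem (mul_mem (hE a).1 hx) (hE a).1
  refine ⟨ι, fun a => φ (E a), hcard, fun a => ⟨evenRetract_mem_evenPart hR hp.1 hΓp (hE a).1,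
    ⟨?_, ?_⟩, fun x hx y hy => ?_⟩, fun a b hab => ?_, fun a b => ?_, fun v => ?_⟩
  · rw [hφmul _ _ (hE a).1, (hE a).2.1.1]
  · rw [hφstar _ (hE a).1, (hE a).2.1.2]
  · rw [hcorner a x hx, hcorner a y hy, hφmul _ _ (hcornerR a y hy.1),
      hφmul _ _ (hcornerR a x hx.1), (hE a).2.2 x hx.1 y hy.1]
  · show φ (E a) * φ (E b) = 0
    rw [hφmul _ _ (hE b).1, horth hab]
    simp only [φ, evenRetract, zero_mul, mul_zero, add_zero]
  · obtain ⟨w, hw, hw₁, hw₂⟩ := hequiv a b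
    refine ⟨φ w, evenRetract_mem_evenPart hR hp.1 hΓp hw, ?_, ?_⟩
    · rw [hφstar _ hw, hφmul _ _ hw, hw₁]
    · rw [hφstar _ hw, hφmul _ _ (star_mem hw), hw₂]
  · have hΓΓ : Γ (Γ ((1 - p) v)) = (1 - p) v := by
      rw [← mul_apply_eq_comp Γ Γ, hR.1.2, one_apply_eq_self]
    have h := (hsum (p v)).add (Γ.hasSum (hsum (Γ ((1 - p) v))))
    rwa [hΓΓ, ← add_apply, add_sub_cancel, one_apply_eq_self] at h

end EvenRetract

structure IsOddCentralSAU (R : Set (H →L[ℂ] H)) (Γ u : H →L[ℂ] H) : Prop where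
  mem_centerSet : u ∈ centerSet R
  isSAU : IsSAU u
  conj_eq_neg : Γ * u * Γ = -u

section OddCentral

variable {R : StarSubalgebra ℂ (H →L[ℂ] H)} {Γ : H →L[ℂ] H}

theorem exists_odd_isSelfAdjoint_mem_centerSet (hR : GradedBy R Γ)
    (hcentral : centerSet R ∩ evenPart R Γ = scalarOps H) (hnf : ¬IsFactor (R : Set (H →L[ℂ] H))) :
    ∃ w ∈ centerSet R, IsSelfAdjoint w ∧ Γ * w * Γ = -w ∧ w ≠ 0 := by
  obtain ⟨z, hzZ, hz, hz0⟩ :=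
    StarSubalgebra.exists_isSelfAdjoint_mem_notMem_of_not_le (not_centerStarSubalgebra_le_bot hnf)
  have hΓzZ : Γ * z * Γ ∈ centerStarSubalgebra R :=
    mem_centerStarSubalgebra.mpr (hR.conj_mem_centerSet (mem_centerStarSubalgebra.mp hzZ))
  have heven : z + Γ * z * Γ ∈ (⊥ : StarSubalgebra ℂ (H →L[ℂ] H)) :=
    mem_bot_of_mem_centerSet_of_conj_eq hcentral (mem_centerStarSubalgebra.mp (add_mem hzZ hΓzZ))
      (by rw [mul_add, add_mul, hR.1.conj_conj, add_comm])
  refine ⟨z - Γ * z * Γ, mem_centerStarSubalgebra.mp (sub_mem hzZ hΓzZ),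
    hz.sub (by rw [IsSelfAdjoint, hR.1.star_conj, hz.star_eq]), ?_, fun h => hz0 ?_⟩
  · rw [mul_sub, sub_mul, hR.1.conj_conj, neg_sub]
  · have hz2 : z = (2⁻¹ : ℂ) • ((z + Γ * z * Γ) + (z - Γ * z * Γ)) := by module
    rw [hz2, h, add_zero]
    exact StarSubalgebra.smul_mem _ heven _

theorem exists_isOddCentralSAU (hR : GradedBy R Γ)
    (hcentral : centerSet R ∩ evenPart R Γ = scalarOps H) (hnf : ¬IsFactor (R : Set (H →L[ℂ] H))) :
    ∃ u, IsOddCentralSAU R Γ u := by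
  obtain ⟨w, hwZ, hw, hwodd, hw0⟩ := exists_odd_isSelfAdjoint_mem_centerSet hR hcentral hnf
  have hwZ' := mem_centerStarSubalgebra.mpr hwZ
  obtain ⟨c, hc⟩ := mem_bot_of_mem_centerSet_of_conj_eq hcentral
    (mem_centerStarSubalgebra.mp (mul_mem hwZ' hwZ'))
    (by rw [← hR.1.conj_mul_conj, hwodd, neg_mul_neg])
  obtain ⟨t, ht⟩ := hw.exists_real_smul_mul_self_eq_one hw0
    (hc.symm.trans (Algebra.algebraMap_eq_smul_one c))
  refine ⟨(t : ℂ) • w, mem_centerStarSubalgebra.mp (StarSubalgebra.smul_mem _ hwZ' _), ⟨?_, ht⟩, ?_⟩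
  · rw [star_smul, hw.star_eq, Complex.star_def, Complex.conj_ofReal]
  · rw [mul_smul_comm, smul_mul_assoc, hwodd, smul_neg]

end OddCentral

namespace IsOddCentralSAU

variable {R : StarSubalgebra ℂ (H →L[ℂ] H)} {Γ u : H →L[ℂ] H}

theorem exists_eq_add_mul (hR : GradedBy R Γ) (hu : IsOddCentralSAU R Γ u)
    {y : H →L[ℂ] H} (hy : y ∈ R) : ∃ a ∈ evenPart R Γ, ∃ b ∈ evenPart R Γ, y = a + b * u := by
  have hΓy := hR.2 y hy
  refine ⟨(2⁻¹ : ℂ) • (y + Γ * y * Γ), ⟨R.smul_mem (add_mem hy hΓy) _, ?_⟩,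
    (2⁻¹ : ℂ) • (y - Γ * y * Γ) * u,
    ⟨mul_mem (R.smul_mem (sub_mem hy hΓy) _) hu.mem_centerSet.1, ?_⟩, ?_⟩
  · rw [mul_smul_comm, smul_mul_assoc, mul_add, add_mul, hR.1.conj_conj, add_comm]
  · rw [← hR.1.conj_mul_conj, hu.conj_eq_neg, mul_smul_comm, smul_mul_assoc, mul_sub, sub_mul,
      hR.1.conj_conj, mul_neg, ← neg_mul, ← smul_neg, neg_sub]
  · rw [mul_assoc _ u u, hu.isSAU.2, mul_one]
    module

theorem isFactor_evenPart (hR : GradedBy R Γ) (hu : IsOddCentralSAU R Γ u)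
    (hcentral : centerSet R ∩ evenPart R Γ = scalarOps H) : IsFactor (evenPart R Γ) := by
  refine Set.Subset.antisymm (fun x hx => ?_) ?_
  · have hxc : ∀ y ∈ evenPart R Γ, Commute x y := hx.2
    rw [← hcentral]
    refine ⟨⟨hx.1.1, fun y hy => ?_⟩, hx.1⟩
    obtain ⟨a, ha, b, hb, rfl⟩ := hu.exists_eq_add_mul hR hy
    exact (hxc a ha).add_right ((hxc b hb).mul_right (hu.mem_centerSet.2 x hx.1.1).symm)
  · intro x hx
    refine ⟨(hcentral ▸ hx : x ∈ centerSet R ∩ evenPart R Γ).2, fun y _ => ?_⟩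
    obtain ⟨c, rfl⟩ := hx
    exact (Commute.one_left y).smul_left c

theorem abelianProj_of_evenPart (hR : GradedBy R Γ) (hu : IsOddCentralSAU R Γ u)
    {e : H →L[ℂ] H} (he : e ∈ evenPart R Γ) (hea : AbelianProj (evenPart R Γ) e) :
    AbelianProj R e := by
  have hu' : ∀ y ∈ R, Commute u y := hu.mem_centerSet.2
  have hcorner : ∀ a b, e * (a + b * u) * e = e * a * e + e * b * e * u := fun a b => by
    rw [mul_add, add_mul, ← mul_assoc e b u, mul_assoc (e * b) u e, (hu' e he.1).eq, ← mul_assoc]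
  have hea' : ∀ a ∈ evenPart R Γ, ∀ c ∈ evenPart R Γ, Commute (e * a * e) (e * c * e) := hea
  have hmem : ∀ z ∈ evenPart R Γ, e * z * e ∈ R := fun z hz => mul_mem (mul_mem he.1 hz.1) he.1
  intro x hx y hy
  obtain ⟨a, ha, b, hb, rfl⟩ := hu.exists_eq_add_mul hR hx
  obtain ⟨c, hc, d, hd, rfl⟩ := hu.exists_eq_add_mul hR hy
  rw [hcorner, hcorner]
  have hcomm : ∀ z ∈ evenPart R Γ, Commute (e * z * e) (e * c * e + e * d * e * u) :=
    fun z hz => (hea' z hz c hc).add_right ((hea' z hz d hd).mul_right (hu' _ (hmem z hz)).symm)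
  have huv : Commute u (e * c * e + e * d * e * u) :=
    hu' _ (add_mem (hmem c hc) (mul_mem (hmem d hd) hu.mem_centerSet.1))
  exact (hcomm a ha).add_left ((hcomm b hb).mul_left huv)

theorem typeI_evenPart (hR : GradedBy R Γ) (hu : IsOddCentralSAU R Γ u) {n : Cardinal}
    (hn : TypeI (R : Set (H →L[ℂ] H)) n) : TypeI (evenPart R Γ) n := by
  set p : H →L[ℂ] H := (2⁻¹ : ℂ) • (1 + u)
  refine typeI_evenPart_of_mem_centerSet hR (p := p) ?_ ⟨?_, ?_⟩ ?_ hn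
  · exact mem_centerStarSubalgebra.mp <| StarSubalgebra.smul_mem _
      (add_mem (one_mem _) (mem_centerStarSubalgebra.mpr hu.mem_centerSet)) _
  · rw [smul_mul_smul_comm, add_mul, mul_add, mul_add, hu.isSAU.2, one_mul, mul_one, one_mul]
    module
  · simp [p, hu.isSAU.1]
  · rw [mul_smul_comm, smul_mul_assoc, mul_add, add_mul, hR.1.conj_one, hu.conj_eq_neg]
    module

end IsOddCentralSAU

/-- if `(R, Ad_Γ)` is central, `R` is of type I_n and not a factor, then
`R⁰` is a type I_n factor and abelian projections of `R⁰` are abelian in `R`. -/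
theorem stmt_16 (R : VonNeumannAlgebra H) (Γ : H →L[ℂ] H) (hΓ : IsSAU Γ)
    (hinv : ∀ x ∈ R, Γ * x * Γ ∈ R)
    (hcentral : centerSet (R : Set (H →L[ℂ] H)) ∩
      evenPart (R : Set (H →L[ℂ] H)) Γ = scalarOps H)
    (n : Cardinal) (hIn : TypeI (R : Set (H →L[ℂ] H)) n)
    (hnf : ¬ IsFactor (R : Set (H →L[ℂ] H))) :
    IsFactor (evenPart (R : Set (H →L[ℂ] H)) Γ) ∧
    TypeI (evenPart (R : Set (H →L[ℂ] H)) Γ) n ∧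
    ∀ e ∈ evenPart (R : Set (H →L[ℂ] H)) Γ, IsProjOp e →
      AbelianProj (evenPart (R : Set (H →L[ℂ] H)) Γ) e →
      AbelianProj (R : Set (H →L[ℂ] H)) e := by
  have hR : GradedBy (R.toStarSubalgebra : Set (H →L[ℂ] H)) Γ := ⟨hΓ, hinv⟩
  obtain ⟨u, hu⟩ := exists_isOddCentralSAU hR hcentral hnf
  exact ⟨hu.isFactor_evenPart hR hcentral, hu.typeI_evenPart hR hIn,
    fun e he _ hea => hu.abelianProj_of_evenPart hR he hea⟩
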